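/- Stable rank lower bound under polynomial spectral decay. Let λ₁ ≥ ... ≥ λ_n > 0 be the eigenvalues of AᵀA for an m×n real matrix A, and suppose c₁·i^{−p} ≤ λ_i ≤ c₂·i^{−p} for all i ∈ {1,...,n}, where p > 1, 0 < c₁ ≤ c₂, and γ = c₂/c₁. Then for every integer s with 0 ≤ s < n satisfying ((s+1)/(n+1))^{p−1} ≤ 1/2, the stable rank satisfies sr_s(A) ≥ (1/(2γ))·(s+1)/(p−1) − 1/γ. -/

import Mathlib

/-!
The lower bound `c₁ i^{-p} ≤ λ_i` bounds the tail `Σ_{i>s} λ_i` below by `c₁ Σ_{s<i≤n} i^{-p}`.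
By Bernoulli's inequality for the exponent `1 - p ≤ 0`, each term satisfies
`i^{-p} ≥ (i^{1-p} - (i+1)^{1-p}) / (p - 1)`, so the sum telescopes to at least
`((s+1)^{1-p} - (n+1)^{1-p}) / (p - 1)`, and the hypothesis on `(s+1)/(n+1)` says exactly that the
second term is at most half the first. Dividing by `λ_{s+1} ≤ c₂ (s+1)^{-p}` gives
`sr_s ≥ (s+1) / (2γ(p-1))`.
-/

open scoped BigOperators
open Matrix

namespace CSSP

variable {m n : ℕ}

/-- The `j`-th column of `A` as a vector in Euclidean space. -/
noncomputable def col {ι : Type*} (A : Matrix (Fin m) ι ℝ) (j : ι) :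
    EuclideanSpace ℝ (Fin m) := WithLp.toLp 2 (fun i => A i j)

/-- The span of the columns of `A` indexed by `S`. -/
noncomputable def colSpan {ι : Type*} (A : Matrix (Fin m) ι ℝ) (S : Finset ι) :
    Submodule ℝ (EuclideanSpace ℝ (Fin m)) :=
  Submodule.span ℝ {x | ∃ j ∈ S, x = col A j}

/-- `Er_A(S) = ‖A - P_S A‖_F²`, the squared Frobenius norm of the residual of projecting
the columns of `A` onto the span of the columns indexed by `S`. -/
noncomputable def Er {ι : Type*} [Fintype ι] (A : Matrix (Fin m) ι ℝ) (S : Finset ι) : ℝ :=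
  ∑ j, ‖col A j - ((colSpan A S).orthogonalProjection (col A j) : EuclideanSpace ℝ (Fin m))‖ ^ 2

/-- Principal subdeterminant `det K_{S,S}`. -/
noncomputable def pdet (K : Matrix (Fin n) (Fin n) ℝ) (S : Finset (Fin n)) : ℝ :=
  (K.submatrix (fun i : {x : Fin n // x ∈ S} => (i : Fin n))
    (fun i : {x : Fin n // x ∈ S} => (i : Fin n))).det

/-- Expectation of `f` under the `k`-DPP with kernel `AᵀA`. -/
noncomputable def kDPPExp (A : Matrix (Fin m) (Fin n) ℝ) (k : ℕ)
    (f : Finset (Fin n) → ℝ) : ℝ :=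
  (∑ S ∈ Finset.univ.filter (fun S : Finset (Fin n) => S.card = k), pdet (Aᵀ * A) S * f S) /
    (∑ S ∈ Finset.univ.filter (fun S : Finset (Fin n) => S.card = k), pdet (Aᵀ * A) S)

/-- Expectation of `f` under the (random-size) DPP with kernel `(1/α)·AᵀA`. -/
noncomputable def dppExp (A : Matrix (Fin m) (Fin n) ℝ) (α : ℝ)
    (f : Finset (Fin n) → ℝ) : ℝ :=
  (∑ S : Finset (Fin n), α⁻¹ ^ S.card * pdet (Aᵀ * A) S * f S) /
    (1 + α⁻¹ • (Aᵀ * A)).det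

/-- `lam` is the (multi-)set of eigenvalues of the symmetric matrix `K`. -/
def IsEigs (K : Matrix (Fin n) (Fin n) ℝ) (lam : Fin n → ℝ) : Prop :=
  ∃ (hK : K.IsHermitian) (σ : Equiv.Perm (Fin n)), ∀ i, lam i = hK.eigenvalues (σ i)

/-- `OPT_k = Σ_{i > k} λ_i` (1-based indexing in the paper; `lam` here is 0-based). -/
noncomputable def opt (lam : Fin n → ℝ) (k : ℕ) : ℝ :=
  ∑ i ∈ Finset.univ.filter (fun i : Fin n => k ≤ (i : ℕ)), lam i

/-- Stable rank of order `s`: `sr_s = (Σ_{i > s} λ_i)/λ_{s+1}`. -/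
noncomputable def srank (lam : Fin n → ℝ) (s : ℕ) (h : s < n) : ℝ :=
  (∑ i ∈ Finset.univ.filter (fun i : Fin n => s ≤ (i : ℕ)), lam i) / lam ⟨s, h⟩

/-- Squared Frobenius norm. -/
noncomputable def frobSq {ι : Type*} [Fintype ι] (M : Matrix (Fin m) ι ℝ) : ℝ :=
  ∑ i, ∑ j, M i j ^ 2

/-- The squared Frobenius error of the best rank-`k` approximation of `A`. -/
noncomputable def optRank {ι : Type*} [Fintype ι] [DecidableEq ι]
    (A : Matrix (Fin m) ι ℝ) (k : ℕ) : ℝ :=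
  sInf {x | ∃ B : Matrix (Fin m) ι ℝ, B.rank ≤ k ∧ x = frobSq (A - B)}

open Finset

lemma one_add_mul_self_le_rpow_one_add_of_nonpos {s : ℝ} (hs : -1 < s) {p : ℝ} (hp : p ≤ 0) :
    1 + p * s ≤ (1 + s) ^ p := by
  have hs' : 0 < 1 + s := by linarith
  have hlog : Real.log (1 + s) ≤ s := by linarith [Real.log_le_sub_one_of_pos hs']
  calc 1 + p * s ≤ Real.exp (p * s) := by linarith [Real.add_one_le_exp (p * s)]
    _ ≤ Real.exp (Real.log (1 + s) * p) := Real.exp_le_exp.mpr (by nlinarith)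
    _ = (1 + s) ^ p := (Real.rpow_def_of_pos hs' p).symm

lemma rpow_add_mul_rpow_sub_one_le_rpow_add_one {x q : ℝ} (hx : 0 < x) (hq : q ≤ 0) :
    x ^ q + q * x ^ (q - 1) ≤ (x + 1) ^ q := by
  have hsplit : (x + 1) ^ q = x ^ q * (1 + x⁻¹) ^ q := by
    rw [← Real.mul_rpow hx.le (by positivity)]
    congr 1
    field_simp
  have hpow : x ^ (q - 1) = x ^ q * x⁻¹ := by
    rw [Real.rpow_sub_one hx.ne', div_eq_mul_inv]
  rw [hsplit, hpow]
  have := one_add_mul_self_le_rpow_one_add_of_nonpos (by linarith [inv_pos.mpr hx]) hq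
  nlinarith [Real.rpow_pos_of_pos hx q]

lemma rpow_one_sub_sub_rpow_one_sub_le_mul_sum_Ico {p : ℝ} (hp : 1 ≤ p) {s n : ℕ} (hsn : s ≤ n) :
    ((s : ℝ) + 1) ^ (1 - p) - ((n : ℝ) + 1) ^ (1 - p) ≤
      (p - 1) * ∑ i ∈ Ico s n, ((i : ℝ) + 1) ^ (-p) := by
  have htelescope := sum_Ico_sub (fun j : ℕ => -((j : ℝ) + 1) ^ (1 - p)) hsn
  simp only [Nat.cast_add, Nat.cast_one, sub_neg_eq_add, neg_add_eq_sub] at htelescope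
  rw [← htelescope, mul_sum]
  refine sum_le_sum fun i _ => ?_
  have := rpow_add_mul_rpow_sub_one_le_rpow_add_one (x := (i : ℝ) + 1) (by positivity)
    (show 1 - p ≤ 0 by linarith)
  rw [show 1 - p - 1 = -p by ring] at this
  linarith

lemma rpow_one_sub_le_half_of_div_rpow_le_half {a b p : ℝ} (ha : 0 < a) (hb : 0 < b)
    (h : (a / b) ^ (p - 1) ≤ 1 / 2) : b ^ (1 - p) ≤ a ^ (1 - p) / 2 := by
  have hfactor : b ^ (1 - p) = a ^ (1 - p) * (a / b) ^ (p - 1) := by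
    have hinv : ∀ x : ℝ, 0 < x → x ^ (1 - p) * x ^ (p - 1) = 1 := fun x hx => by
      rw [← Real.rpow_add hx, sub_add_sub_cancel, sub_self, Real.rpow_zero]
    rw [Real.div_rpow ha.le hb.le, mul_div_assoc', hinv a ha, eq_div_iff (by positivity), hinv b hb]
  rw [hfactor]
  have := Real.rpow_pos_of_pos ha (1 - p)
  nlinarith

lemma le_sum_Ico_rpow_neg {p : ℝ} (hp : 1 < p) {s n : ℕ} (hsn : s ≤ n)
    (hcond : (((s : ℝ) + 1) / ((n : ℝ) + 1)) ^ (p - 1) ≤ 1 / 2) :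
    ((s : ℝ) + 1) * ((s : ℝ) + 1) ^ (-p) / (2 * (p - 1)) ≤
      ∑ i ∈ Ico s n, ((i : ℝ) + 1) ^ (-p) := by
  have hhalf := rpow_one_sub_le_half_of_div_rpow_le_half (by positivity) (by positivity) hcond
  have htail := rpow_one_sub_sub_rpow_one_sub_le_mul_sum_Ico hp.le hsn
  have hhead : ((s : ℝ) + 1) ^ (1 - p) = ((s : ℝ) + 1) * ((s : ℝ) + 1) ^ (-p) := by
    rw [sub_eq_add_neg, Real.rpow_add (by positivity), Real.rpow_one]
  rw [div_le_iff₀ (by linarith)]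
  linarith

lemma sum_filter_le_val_eq_sum_Ico {M : Type*} [AddCommMonoid M] (g : ℕ → M) (s : ℕ) :
    ∑ i ∈ univ.filter (fun i : Fin n => s ≤ (i : ℕ)), g i = ∑ i ∈ Ico s n, g i := by
  rw [sum_filter, Fin.sum_univ_eq_sum_range (fun j => if s ≤ j then g j else 0), ← sum_filter]
  congr 1
  ext j
  simp [and_comm]

lemma div_le_srank {lam : Fin n → ℝ} {f : ℕ → ℝ} (hf : ∀ i, 0 < f i) {c₁ c₂ : ℝ} (hc₁ : 0 < c₁)
    (hlower : ∀ i : Fin n, c₁ * f i ≤ lam i) {s : ℕ} (hsn : s < n)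
    (hupper : lam ⟨s, hsn⟩ ≤ c₂ * f s) :
    c₁ * (∑ i ∈ Ico s n, f i) / (c₂ * f s) ≤ srank lam s hsn := by
  have hnum :
      c₁ * ∑ i ∈ Ico s n, f i ≤ ∑ i ∈ univ.filter (fun i : Fin n => s ≤ (i : ℕ)), lam i := by
    rw [mul_sum, ← sum_filter_le_val_eq_sum_Ico]
    exact sum_le_sum fun i _ => hlower i
  have hlam_pos : 0 < lam ⟨s, hsn⟩ := (mul_pos hc₁ (hf s)).trans_le (hlower ⟨s, hsn⟩)
  have hnum_nonneg := (mul_nonneg hc₁.le (sum_nonneg fun i _ => (hf i).le)).trans hnum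
  exact div_le_div₀ hnum_nonneg hnum hlam_pos hupper

theorem srank_poly_decay_general {n : ℕ}
    (lam : Fin n → ℝ)
    (p c₁ c₂ : ℝ) (hp : 1 < p) (hc₁ : 0 < c₁)
    (hbound : ∀ i : Fin n,
      c₁ * (((i : ℕ) : ℝ) + 1) ^ (-p) ≤ lam i ∧
        lam i ≤ c₂ * (((i : ℕ) : ℝ) + 1) ^ (-p))
    (s : ℕ) (hsn : s < n)
    (hcond : (((s : ℝ) + 1) / ((n : ℝ) + 1)) ^ (p - 1) ≤ 1 / 2) :
    1 / (2 * (c₂ / c₁)) * (((s : ℝ) + 1) / (p - 1)) - 1 / (c₂ / c₁) ≤ srank lam s hsn := by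
  set f : ℕ → ℝ := fun i => ((i : ℝ) + 1) ^ (-p)
  have hf : ∀ i, 0 < f i := fun i => by positivity
  have hupper : lam ⟨s, hsn⟩ ≤ c₂ * f s := (hbound ⟨s, hsn⟩).2
  have hc₂ : 0 < c₂ :=
    pos_of_mul_pos_left ((mul_pos hc₁ (hf s)).trans_le ((hbound ⟨s, hsn⟩).1.trans hupper)) (hf s).le
  have hsum := le_sum_Ico_rpow_neg hp hsn.le hcond
  calc 1 / (2 * (c₂ / c₁)) * (((s : ℝ) + 1) / (p - 1)) - 1 / (c₂ / c₁)
      ≤ c₁ * (((s : ℝ) + 1) * f s / (2 * (p - 1))) / (c₂ * f s) := by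
        have hfs := hf s
        have hp1 : 0 < p - 1 := by linarith
        rw [sub_le_iff_le_add]
        field_simp
        nlinarith
    _ ≤ c₁ * (∑ i ∈ Ico s n, f i) / (c₂ * f s) := by gcongr
    _ ≤ srank lam s hsn := div_le_srank hf hc₁ (fun i => (hbound i).1) hsn hupper

/-- Stable rank lower bound under polynomial spectral decay: if `c₁·i^{−p} ≤ λ_i ≤ c₂·i^{−p}`
with `p > 1` and `((s+1)/(n+1))^{p−1} ≤ 1/2`, then
`sr_s(A) ≥ (1/(2γ))·(s+1)/(p−1) − 1/γ` where `γ = c₂/c₁`. -/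
theorem srank_poly_decay {m n : ℕ} (A : Matrix (Fin m) (Fin n) ℝ)
    (lam : Fin n → ℝ) (hlam : Antitone lam) (heig : IsEigs (Aᵀ * A) lam)
    (hpos : ∀ i, 0 < lam i)
    (p c₁ c₂ : ℝ) (hp : 1 < p) (hc₁ : 0 < c₁) (hcc : c₁ ≤ c₂)
    (hbound : ∀ i : Fin n,
      c₁ * (((i : ℕ) : ℝ) + 1) ^ (-p) ≤ lam i ∧
        lam i ≤ c₂ * (((i : ℕ) : ℝ) + 1) ^ (-p))
    (s : ℕ) (hsn : s < n)
    (hcond : (((s : ℝ) + 1) / ((n : ℝ) + 1)) ^ (p - 1) ≤ 1 / 2) :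
    1 / (2 * (c₂ / c₁)) * (((s : ℝ) + 1) / (p - 1)) - 1 / (c₂ / c₁) ≤ srank lam s hsn :=
  srank_poly_decay_general lam p c₁ c₂ hp hc₁ hbound s hsn hcond

end CSSP
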